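/- arXiv:1105.5379 — 4 statements merged into one kernel-verified Lean document; each statement's English description precedes it below -/
import Mathlib

section
/- Suppose F satisfies Assumption 1 with constant β > 0. Fix x ≥ 0 at which F is differentiable, a coordinate j, and let δx_j = max{ −x_j , −(∇F(x))_j / β }. Then F(x + δx_j e^j) ≤ F(x) − (β/2) (δx_j)². In particular a single Shooting update never increases the objective. -/
/-- `(∇F(x))_j`, the `j`-th coordinate of the gradient of `F` at `x`. -/
noncomputable def grad {m : ℕ} (F : (Fin m → ℝ) → ℝ) (x : Fin m → ℝ) (j : Fin m) : ℝ :=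
  fderiv ℝ F x (Pi.single j 1)

/-- Assumption 1: for every feasible `x`, coordinate `j`, and step `δ` keeping `x + δ e^j`
feasible, `F(x + δ e^j) ≤ F(x) + δ (∇F(x))_j + (β/2) δ²`. -/
def Assumption1 {m : ℕ} (β : ℝ) (F : (Fin m → ℝ) → ℝ) : Prop :=
  ∀ x : Fin m → ℝ, 0 ≤ x → ∀ j : Fin m, ∀ δ : ℝ, 0 ≤ x + Pi.single j δ →
    F (x + Pi.single j δ) ≤ F x + δ * grad F x j + β / 2 * δ ^ 2

/-- A single Shooting update `δx_j = max{ -x_j , -(∇F(x))_j/β }` decreases the objective by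
at least `(β/2) (δx_j)²`; in particular it never increases the objective. -/
theorem shooting_single_update_descent {m : ℕ} (β : ℝ) (hβ : 0 < β)
    (F : (Fin m → ℝ) → ℝ) (hconv : ConvexOn ℝ {z : Fin m → ℝ | 0 ≤ z} F)
    (hF : Assumption1 β F) (x : Fin m → ℝ) (hx : 0 ≤ x)
    (hdiff : DifferentiableAt ℝ F x) (j : Fin m)
    (δ : ℝ) (hδ : δ = max (-x j) (-(grad F x j) / β)) :
    F (x + Pi.single j δ) ≤ F x - β / 2 * δ ^ 2 := by
  set g := grad F x j with hg
  have hδx : -x j ≤ δ := hδ ▸ le_max_left _ _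
  have hfeas : 0 ≤ x + Pi.single j δ := by
    intro i
    rcases eq_or_ne i j with rfl | h
    · simp only [Pi.add_apply, Pi.single_eq_same, Pi.zero_apply]
      have := hx i
      simp only [Pi.zero_apply] at this
      linarith
    · simpa [Pi.single_eq_of_ne h] using hx i
  have key := hF x hx j δ hfeas
  have halg : δ * g + β * δ ^ 2 ≤ 0 := by
    rcases max_cases (-x j) (-g / β) with ⟨h1, h2⟩ | ⟨h1, h2⟩
    · -- δ = -x j and -g/β ≤ -x j
      rw [hδ, h1]
      have hxj : (0:ℝ) ≤ x j := hx j
      have hgx : β * x j ≤ g := by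
        rw [div_le_iff₀ hβ] at h2
        nlinarith
      nlinarith [mul_nonneg hxj (by linarith : (0:ℝ) ≤ g - β * x j)]
    · rw [hδ, h1]
      field_simp
      ring_nf
      nlinarith [sq_nonneg g]
  rw [← hg] at key
  linarith
end

section
/- (Theorem 2, Lasso interference decomposition.) Fix x ∈ ℝ^m with x ≥ 0, a number of parallel updates P, and indices i_1, …, i_P ∈ {1,…,m} (repetitions allowed). For each j let δx_{i_j} = max{ −x_{i_j} , −(∇F(x))_{i_j} }, and let Δx = Σ_{j=1}^P δx_{i_j} e^{i_j} be the collective update. Then F(x + Δx) − F(x) ≤ −(1/2) Σ_{j=1}^P (δx_{i_j})² + (1/2) Σ_{j ≠ k} (AᵀA)_{i_j, i_k} δx_{i_j} δx_{i_k}, i.e., the change in objective is bounded by a sequential-progress term plus an interference term involving inner products of the chosen feature columns. -/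
/-!
The Lasso objective is exactly quadratic, with Hessian `AᵀA`:
`F (x + d) = F x + ∇F(x) ⬝ d + ½ dᵀ AᵀA d`. For `d = Δx` the quadratic term is
`½ Σ_{j,k} (AᵀA)_{i_j i_k} δ_j δ_k`, whose diagonal part is `½ Σ δ_j²` because the columns
have unit norm. The linear term is `Σ_j ∇F(x)_{i_j} δ_j`, and each summand is at most `-δ_j²`:
either `δ_j = -∇F(x)_{i_j}`, or the step is clipped at `δ_j = -x_{i_j} ≥ -∇F(x)_{i_j}`,
in which case `δ_j ≤ 0` and `∇F(x)_{i_j} + δ_j ≥ 0`.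
-/

open Matrix Finset

theorem mul_le_neg_sq_of_eq_max_neg {a b δ : ℝ} (ha : 0 ≤ a) (hδ : δ = max (-a) (-b)) :
    b * δ ≤ -δ ^ 2 := by
  rcases max_choice (-a) (-b) with h | h <;> rw [hδ, h]
  · have hab : a ≤ b := neg_le_neg_iff.mp (max_eq_left_iff.mp h)
    nlinarith [mul_le_mul_of_nonneg_left hab ha]
  · exact (by ring : b * -b = -(-b) ^ 2).le

theorem sum_sum_eq_sum_diag_add_sum_sum_erase {ι : Type*} [Fintype ι] [DecidableEq ι]
    (f : ι → ι → ℝ) : ∑ p, ∑ q, f p q = ∑ p, f p p + ∑ p, ∑ q ∈ univ.erase p, f p q := by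
  rw [← sum_add_distrib]
  exact sum_congr rfl fun p _ => (add_sum_erase _ _ (mem_univ p)).symm

section Lasso

variable {ι κ : Type*} [Fintype ι] [Fintype κ]

theorem mulVec_dotProduct_mulVec (A : Matrix ι κ ℝ) (v w : κ → ℝ) :
    A *ᵥ v ⬝ᵥ A *ᵥ w = v ⬝ᵥ (Aᵀ * A) *ᵥ w := by
  rw [← mulVec_mulVec, dotProduct_mulVec v, vecMul_transpose]

theorem sum_single_dotProduct_mulVec_sum_single [DecidableEq κ] (M : Matrix κ κ ℝ)
    (idx : ι → κ) (δ : ι → ℝ) :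
    (∑ p, Pi.single (idx p) (δ p)) ⬝ᵥ M *ᵥ ∑ q, Pi.single (idx q) (δ q) =
      ∑ p, ∑ q, M (idx p) (idx q) * δ p * δ q := by
  simp only [sum_dotProduct, single_dotProduct, mulVec_sum, mulVec_single, Finset.sum_apply,
    mul_sum]
  refine sum_congr rfl fun p _ => sum_congr rfl fun q _ => ?_
  simp only [Pi.smul_apply, col_apply, op_smul_eq_mul]
  ring

noncomputable def lassoObjective (A : Matrix ι κ ℝ) (y : ι → ℝ) (lam : ℝ) (x : κ → ℝ) : ℝ :=
  1 / 2 * ((A *ᵥ x - y) ⬝ᵥ (A *ᵥ x - y)) + lam * ∑ j, x j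

noncomputable def lassoGradient (A : Matrix ι κ ℝ) (y : ι → ℝ) (lam : ℝ) (x : κ → ℝ) :
    κ → ℝ :=
  Aᵀ *ᵥ (A *ᵥ x - y) + lam • 1

theorem lassoObjective_add (A : Matrix ι κ ℝ) (y : ι → ℝ) (lam : ℝ) (x d : κ → ℝ) :
    lassoObjective A y lam (x + d) =
      lassoObjective A y lam x + lassoGradient A y lam x ⬝ᵥ d + 1 / 2 * (A *ᵥ d ⬝ᵥ A *ᵥ d) := by
  have hres : A *ᵥ (x + d) - y = (A *ᵥ x - y) + A *ᵥ d := by rw [mulVec_add]; abel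
  simp only [lassoObjective, lassoGradient, hres, add_dotProduct, dotProduct_add, smul_dotProduct,
    one_dotProduct, mulVec_transpose, ← dotProduct_mulVec, dotProduct_comm (A *ᵥ d) (A *ᵥ x - y),
    Pi.add_apply, sum_add_distrib, smul_eq_mul]
  ring

theorem differentiable_lassoObjective (A : Matrix ι κ ℝ) (y : ι → ℝ) (lam : ℝ) :
    Differentiable ℝ (lassoObjective A y lam) := by
  unfold lassoObjective
  simp only [dotProduct, mulVec, Pi.sub_apply]
  fun_prop

theorem hasLineDerivAt_lassoObjective (A : Matrix ι κ ℝ) (y : ι → ℝ) (lam : ℝ) (x v : κ → ℝ) :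
    HasLineDerivAt ℝ (lassoObjective A y lam) (lassoGradient A y lam x ⬝ᵥ v) x v := by
  have hline : (fun t : ℝ => lassoObjective A y lam (x + t • v)) = fun t =>
      lassoObjective A y lam x + t * (lassoGradient A y lam x ⬝ᵥ v) +
        t ^ 2 * (1 / 2 * (A *ᵥ v ⬝ᵥ A *ᵥ v)) := by
    funext t
    rw [lassoObjective_add, mulVec_smul, dotProduct_smul, smul_dotProduct, dotProduct_smul]
    simp only [smul_eq_mul]
    ring
  unfold HasLineDerivAt
  rw [hline]
  simpa using (((hasDerivAt_id' (0 : ℝ)).mul_const _).const_add _).fun_add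
    ((hasDerivAt_pow 2 (0 : ℝ)).mul_const _)

theorem grad_lassoObjective {m : ℕ} (A : Matrix ι (Fin m) ℝ) (y : ι → ℝ) (lam : ℝ)
    (x : Fin m → ℝ) (j : Fin m) :
    grad (lassoObjective A y lam) x j = lassoGradient A y lam x j := by
  rw [grad, ← (differentiable_lassoObjective A y lam x).lineDeriv_eq_fderiv,
    (hasLineDerivAt_lassoObjective A y lam x _).lineDeriv, dotProduct_single, mul_one]

end Lasso

theorem lasso_interference_decomposition_general {n m : ℕ}
    (A : Matrix (Fin n) (Fin m) ℝ) (y : Fin n → ℝ) (lam : ℝ)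
    (hA : ∀ j : Fin m, ∑ i, (A i j) ^ 2 = 1)
    (F : (Fin m → ℝ) → ℝ)
    (hF : F = fun x => (1 / 2) * ∑ i, (A.mulVec x i - y i) ^ 2 + lam * ∑ j, x j)
    (x : Fin m → ℝ) (hx : 0 ≤ x)
    (P : ℕ) (idx : Fin P → Fin m)
    (δ : Fin P → ℝ) (hδ : ∀ j, δ j = max (-(x (idx j))) (-(grad F x (idx j))))
    (Δx : Fin m → ℝ) (hΔx : Δx = ∑ j : Fin P, Pi.single (idx j) (δ j)) :
    F (x + Δx) - F x ≤
      -(1 / 2) * ∑ j : Fin P, (δ j) ^ 2 +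
        (1 / 2) * ∑ j : Fin P, ∑ k ∈ Finset.univ.erase j,
          (Aᵀ * A) (idx j) (idx k) * δ j * δ k := by
  obtain rfl : F = lassoObjective A y lam :=
    hF.trans (funext fun x => by simp only [lassoObjective, dotProduct, Pi.sub_apply, sq])
  subst hΔx
  have hstep (p : Fin P) : lassoGradient A y lam x (idx p) * δ p ≤ -δ p ^ 2 :=
    mul_le_neg_sq_of_eq_max_neg (hx (idx p)) (by rw [hδ p, grad_lassoObjective])
  have hdiag (j : Fin m) : (Aᵀ * A) j j = 1 := by
    simpa only [mul_apply, transpose_apply, sq] using hA j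
  rw [lassoObjective_add, mulVec_dotProduct_mulVec, sum_single_dotProduct_mulVec_sum_single,
    sum_sum_eq_sum_diag_add_sum_sum_erase]
  simp only [hdiag, one_mul, ← sq, dotProduct_sum, dotProduct_single]
  linarith [(sum_le_sum fun p (_ : p ∈ univ) => hstep p).trans_eq (sum_neg_distrib _)]

/-- Theorem 2 (Lasso interference decomposition): for the Lasso objective with unit-norm
feature columns (`β = 1`), the change in objective from a collective parallel update
`Δx = Σ_j δx_{i_j} e^{i_j}` is bounded by a sequential-progress term plus an interference
term involving inner products of the chosen feature columns. -/
theorem lasso_interference_decomposition {n m : ℕ}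
    (A : Matrix (Fin n) (Fin m) ℝ) (y : Fin n → ℝ) (lam : ℝ) (hlam : 0 ≤ lam)
    (hA : ∀ j : Fin m, ∑ i, (A i j) ^ 2 = 1)
    (F : (Fin m → ℝ) → ℝ)
    (hF : F = fun x => (1 / 2) * ∑ i, (A.mulVec x i - y i) ^ 2 + lam * ∑ j, x j)
    (x : Fin m → ℝ) (hx : 0 ≤ x)
    (P : ℕ) (idx : Fin P → Fin m)
    (δ : Fin P → ℝ) (hδ : ∀ j, δ j = max (-(x (idx j))) (-(grad F x (idx j))))
    (Δx : Fin m → ℝ) (hΔx : Δx = ∑ j : Fin P, Pi.single (idx j) (δ j)) :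
    F (x + Δx) - F x ≤
      -(1 / 2) * ∑ j : Fin P, (δ j) ^ 2 +
        (1 / 2) * ∑ j : Fin P, ∑ k ∈ Finset.univ.erase j,
          (Aᵀ * A) (idx j) (idx k) * δ j * δ k :=
  lasso_interference_decomposition_general A y lam hA F hF x hx P idx δ hδ Δx hΔx
end

section
/- (Expected one-step progress of Shooting.) Suppose F satisfies Assumption 1 with constant β > 0. Fix x ≥ 0 at which F is differentiable, and for each coordinate j let δx_j = max{ −x_j , −(∇F(x))_j / β }. If j is chosen uniformly at random from {1,…,m}, then E_j[ F(x + δx_j e^j) ] − F(x) ≤ −(β/(2m)) Σ_{j=1}^m (δx_j)². -/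
open Finset

/-- Expected one-step progress of Shooting: if the updated coordinate `j` is chosen
uniformly at random from `{1,…,m}`, then
`E_j[F(x + δx_j e^j)] - F(x) ≤ -(β/(2m)) Σ_j (δx_j)²`. -/
theorem shooting_expected_progress {m : ℕ} (hm : 0 < m)
    (β : ℝ) (hβ : 0 < β) (F : (Fin m → ℝ) → ℝ)
    (hconv : ConvexOn ℝ {z : Fin m → ℝ | 0 ≤ z} F)
    (hF : Assumption1 β F)
    (x : Fin m → ℝ) (hx : 0 ≤ x) (hdiff : DifferentiableAt ℝ F x)
    (δ : Fin m → ℝ) (hδ : ∀ j, δ j = max (-(x j)) (-(grad F x j) / β)) :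
    (1 / (m : ℝ)) * (∑ j, F (x + Pi.single j (δ j))) - F x ≤
      -(β / (2 * m)) * ∑ j, (δ j) ^ 2 := by
  have key : ∀ j : Fin m, F (x + Pi.single j (δ j)) ≤ F x - β / 2 * (δ j) ^ 2 := by
    intro j
    have hδj := hδ j
    have hfeas : 0 ≤ x + Pi.single j (δ j) := by
      intro i
      simp only [Pi.add_apply, Pi.single_apply]
      by_cases h : i = j
      · subst h
        simp only [if_pos rfl, Pi.zero_apply, if_true]
        have h1 : -(x i) ≤ δ i := hδj ▸ le_max_left _ _
        have h2 : (0:ℝ) ≤ x i := by simpa using hx i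
        linarith
      · simpa [h] using hx i
    have hA := hF x hx j (δ j) hfeas
    have hineq : δ j * grad F x j + β / 2 * (δ j) ^ 2 ≤ -(β / 2 * (δ j) ^ 2) := by
      have hprod : δ j * (grad F x j + β * δ j) ≤ 0 := by
        rcases le_or_gt (-(x j)) (-(grad F x j) / β) with h | h
        · have : δ j = -(grad F x j) / β := by rw [hδj, max_eq_right h]
          have : grad F x j + β * δ j = 0 := by
            rw [this]; field_simp; ring
          rw [this]; simp
        · have hδeq : δ j = -(x j) := by rw [hδj, max_eq_left h.le]
          have hxj : (0:ℝ) ≤ x j := by simpa using hx j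
          have h1 : δ j ≤ 0 := by rw [hδeq]; linarith
          have h2 : 0 ≤ grad F x j + β * δ j := by
            rw [hδeq]
            have : -(grad F x j) / β < -(x j) := h
            have := (div_lt_iff₀ hβ).mp this
            nlinarith
          exact mul_nonpos_of_nonpos_of_nonneg h1 h2
      nlinarith
    linarith
  have hsum : ∑ j, F (x + Pi.single j (δ j)) ≤
      ∑ j : Fin m, (F x - β / 2 * (δ j) ^ 2) :=
    Finset.sum_le_sum fun j _ => key j
  have hm' : (0:ℝ) < m := Nat.cast_pos.mpr hm
  rw [Finset.sum_sub_distrib, Finset.sum_const, Finset.card_univ, Fintype.card_fin,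
    ← Finset.mul_sum] at hsum
  have : (1 / (m : ℝ)) * (∑ j, F (x + Pi.single j (δ j))) ≤
      (1 / (m : ℝ)) * ((m : ℝ) * F x - β / 2 * ∑ j, (δ j) ^ 2) := by
    apply mul_le_mul_of_nonneg_left _ (by positivity)
    simpa [nsmul_eq_mul] using hsum
  have heq : (1 / (m : ℝ)) * ((m : ℝ) * F x - β / 2 * ∑ j, (δ j) ^ 2) =
      F x + (-(β / (2 * m)) * ∑ j, (δ j) ^ 2) := by
    field_simp; ring
  linarith [heq ▸ this]
end

section
/- (Step size 1/P guarantees descent of parallel updates.) Let F : ℝ^m → ℝ be convex and satisfy Assumption 1 with constant β > 0. Fix x ≥ 0 at which F is differentiable, indices i_1, …, i_P ∈ {1,…,m}, and update values δx_{i_j} = max{ −x_{i_j} , −(∇F(x))_{i_j}/β }. Then F( x + (1/P) Σ_{j=1}^P δx_{i_j} e^{i_j} ) ≤ (1/P) Σ_{j=1}^P F( x + δx_{i_j} e^{i_j} ) ≤ F(x) − (β/(2P)) Σ_{j=1}^P (δx_{i_j})². In particular, scaling the collective parallel update by 1/P never increases the objective. -/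
open Finset

/-! Each single-coordinate point `x + δ_j e^{i_j}` is feasible, and the clipped step
`δ = max (-x_i) (-g/β)` satisfies `δ (g + β δ) ≤ 0`: either it is the unconstrained minimiser
`-g/β`, or it is `-x_i ≤ 0` while `g + β δ ≥ 0`. Assumption 1 then gives
`F (x + δ e^i) ≤ F x - β/2 δ²`. The update scaled by `1/P` is the average of these `P` points,
so Jensen's inequality bounds `F` there by the average of the single-coordinate values. -/

theorem ConvexOn.map_add_inv_card_smul_sum_le {𝕜 E ι : Type*} [Field 𝕜] [LinearOrder 𝕜]
    [IsStrictOrderedRing 𝕜] [AddCommGroup E] [Module 𝕜 E] {s : Set E} {f : E → 𝕜}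
    [Fintype ι] [Nonempty ι] (hf : ConvexOn 𝕜 s f) (x : E) {d : ι → E}
    (hmem : ∀ i, x + d i ∈ s) :
    f (x + (Fintype.card ι : 𝕜)⁻¹ • ∑ i, d i) ≤ (Fintype.card ι : 𝕜)⁻¹ * ∑ i, f (x + d i) := by
  have hcard : (Fintype.card ι : 𝕜) ≠ 0 := by simp
  have hmean : x + (Fintype.card ι : 𝕜)⁻¹ • ∑ i, d i =
      ∑ i, (Fintype.card ι : 𝕜)⁻¹ • (x + d i) := by
    rw [← smul_sum, sum_add_distrib, smul_add, sum_const, card_univ,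
      ← Nat.cast_smul_eq_nsmul 𝕜, smul_smul, inv_mul_cancel₀ hcard, one_smul]
  rw [hmean, mul_sum]
  exact hf.map_sum_le (fun _ _ => by positivity) (by simp [hcard]) (fun i _ => hmem i)

theorem Pi.add_single_nonneg {ι α : Type*} [DecidableEq ι] [AddCommGroup α] [PartialOrder α]
    [IsOrderedAddMonoid α] {x : ι → α} {i : ι} {d : α} (hx : 0 ≤ x) (hd : -x i ≤ d) :
    0 ≤ x + Pi.single i d := by
  intro k
  rcases eq_or_ne k i with rfl | hk
  · simpa [← neg_le_iff_add_nonneg'] using hd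
  · simpa [hk] using hx k

theorem mul_add_mul_nonpos_of_eq_max {a g β d : ℝ} (ha : 0 ≤ a) (hβ : 0 < β)
    (hd : d = max (-a) (-g / β)) : d * (g + β * d) ≤ 0 := by
  have hg : 0 ≤ g + β * d := by
    have := (div_le_iff₀ hβ).mp (hd ▸ le_max_right (-a) (-g / β))
    linarith
  rcases max_choice (-a) (-g / β) with h | h <;> rw [h] at hd
  · exact mul_nonpos_of_nonpos_of_nonneg (by linarith) hg
  · rw [hd, mul_div_cancel₀ _ hβ.ne', add_neg_cancel, mul_zero]

theorem Assumption1.le_sub_of_eq_max {m : ℕ} {β : ℝ} {F : (Fin m → ℝ) → ℝ} (hF : Assumption1 β F)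
    (hβ : 0 < β) {x : Fin m → ℝ} (hx : 0 ≤ x) {i : Fin m} {d : ℝ}
    (hd : d = max (-(x i)) (-(grad F x i) / β)) :
    F (x + Pi.single i d) ≤ F x - β / 2 * d ^ 2 := by
  have hfeas : 0 ≤ x + Pi.single i d := Pi.add_single_nonneg hx (hd ▸ le_max_left _ _)
  linear_combination hF x hx i d hfeas + mul_add_mul_nonpos_of_eq_max (hx i) hβ hd

theorem parallel_step_size_inv_p_descent_general {m P : ℕ} (hP : 0 < P)
    (β : ℝ) (hβ : 0 < β) (F : (Fin m → ℝ) → ℝ)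
    (hconv : ConvexOn ℝ {z : Fin m → ℝ | 0 ≤ z} F)
    (hF : Assumption1 β F)
    (x : Fin m → ℝ) (hx : 0 ≤ x)
    (idx : Fin P → Fin m)
    (δ : Fin P → ℝ) (hδ : ∀ j, δ j = max (-(x (idx j))) (-(grad F x (idx j)) / β)) :
    F (x + ((P : ℝ))⁻¹ • (∑ j : Fin P, Pi.single (idx j) (δ j) : Fin m → ℝ)) ≤
        (1 / (P : ℝ)) * ∑ j : Fin P, F (x + Pi.single (idx j) (δ j)) ∧
      (1 / (P : ℝ)) * (∑ j : Fin P, F (x + Pi.single (idx j) (δ j))) ≤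
        F x - β / (2 * P) * ∑ j : Fin P, (δ j) ^ 2 := by
  have : NeZero P := ⟨hP.ne'⟩
  have hfeasible (j : Fin P) : x + Pi.single (idx j) (δ j) ∈ {z : Fin m → ℝ | 0 ≤ z} :=
    Pi.add_single_nonneg hx (hδ j ▸ le_max_left _ _)
  refine ⟨?_, ?_⟩
  · simpa only [Fintype.card_fin, one_div] using hconv.map_add_inv_card_smul_sum_le x hfeasible
  · calc (1 / (P : ℝ)) * ∑ j, F (x + Pi.single (idx j) (δ j))
        ≤ (1 / (P : ℝ)) * ∑ j : Fin P, (F x - β / 2 * δ j ^ 2) := by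
          gcongr with j
          exact hF.le_sub_of_eq_max hβ hx (hδ j)
      _ = F x - β / (2 * P) * ∑ j : Fin P, (δ j) ^ 2 := by
          rw [sum_sub_distrib, sum_const, card_univ, Fintype.card_fin, nsmul_eq_mul, ← mul_sum]
          field_simp

/-- Step size `1/P` guarantees descent of parallel coordinate updates: by convexity,
`F(x + (1/P) Σ_j δx_{i_j} e^{i_j}) ≤ (1/P) Σ_j F(x + δx_{i_j} e^{i_j})
  ≤ F(x) - (β/(2P)) Σ_j (δx_{i_j})²`,
so scaling the collective parallel update by `1/P` never increases the objective. -/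
theorem parallel_step_size_inv_p_descent {m P : ℕ} (hm : 0 < m) (hP : 0 < P)
    (β : ℝ) (hβ : 0 < β) (F : (Fin m → ℝ) → ℝ)
    (hconv : ConvexOn ℝ {z : Fin m → ℝ | 0 ≤ z} F)
    (hF : Assumption1 β F)
    (x : Fin m → ℝ) (hx : 0 ≤ x) (hdiff : DifferentiableAt ℝ F x)
    (idx : Fin P → Fin m)
    (δ : Fin P → ℝ) (hδ : ∀ j, δ j = max (-(x (idx j))) (-(grad F x (idx j)) / β)) :
    F (x + ((P : ℝ))⁻¹ • (∑ j : Fin P, Pi.single (idx j) (δ j) : Fin m → ℝ)) ≤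
        (1 / (P : ℝ)) * ∑ j : Fin P, F (x + Pi.single (idx j) (δ j)) ∧
      (1 / (P : ℝ)) * (∑ j : Fin P, F (x + Pi.single (idx j) (δ j))) ≤
        F x - β / (2 * P) * ∑ j : Fin P, (δ j) ^ 2 :=
  parallel_step_size_inv_p_descent_general hP β hβ F hconv hF x hx idx δ hδ
end
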